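/- Let p be an odd prime, r ≥ 1, 1 ≤ j ≤ r, and l ∈ {0,…,p−1}. With D_l = {u : 0 ≤ u < p^{r+1}, gcd(u,p)=1, H_{r−1}(u)=l}, the map u ↦ u mod p^j from D_l to (Z/p^j)^* is surjective and every element of (Z/p^j)^* has exactly p^{r−j} preimages in D_l. -/

import Mathlib

/-- The Euler quotient `Q_t(u)` modulo `p^t`, zero when `gcd(u,p) > 1` (and `Q_0 = 0`). -/
def eulerQuotient (p t u : ℕ) : ℕ :=
  if Nat.Coprime u p then (u ^ (p ^ t).totient - 1) / p ^ t % p ^ t else 0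

/-- The highest-level quotient `H_{r-1}(u) = (Q_r(u) - Q_{r-1}(u))/p^{r-1} mod p`. -/
def levelQuotient (p r u : ℕ) : ℕ :=
  ((((eulerQuotient p r u : ℤ) - (eulerQuotient p (r - 1) u : ℤ)) / (p : ℤ) ^ (r - 1))
    % (p : ℤ)).toNat

/-!
Write `u = a + t p^r` with `a < p^r`, `t < p`, and put `n = φ(p^r)`. Expanding to first order,
`u^n ≡ a^n + n a^(n-1) t p^r (mod p^(2r))` and `u^φ(p^(r-1)) ≡ a^φ(p^(r-1)) (mod p^(2(r-1)))`.
Hence `Q_{r-1}(u) = Q_{r-1}(a)` and `Q_r(u) ≡ Q_r(a) + (p-1) a^(n-1) t p^(r-1) (mod p^r)`.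
Adding `c p^(r-1)` to a numerator adds exactly `c` to its floor quotient by `p^(r-1)`, so,
without knowing that `p^(r-1)` divides `Q_r - Q_{r-1}`, we get
`H_{r-1}(a + t p^r) ≡ H_{r-1}(a) - a^(n-1) t (mod p)`. This is a bijective function of `t`
modulo `p`, so every unit `a` modulo `p^r` has exactly one lift to `D_l`, and the fibre of `D_l`
over a unit modulo `p^j` corresponds to the `p^(r-j)` residues modulo `p^r` above it.
-/

open Finset
open scoped Nat

theorem Int.ediv_modEq_add_of_modEq {a b c d m : ℤ} (hd : d ≠ 0)
    (h : b ≡ a + c * d [ZMOD d * m]) : b / d ≡ a / d + c [ZMOD m] := by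
  obtain ⟨k, hk⟩ := h.symm.dvd
  rw [show b = a + (c + m * k) * d by linear_combination hk, Int.add_mul_ediv_right _ _ hd]
  exact Int.modEq_iff_dvd.mpr ⟨-k, by ring⟩

theorem Int.add_pow_modEq (x y : ℤ) (n : ℕ) :
    (x + y) ^ n ≡ x ^ n + n * x ^ (n - 1) * y [ZMOD y ^ 2] := by
  refine (Int.modEq_iff_dvd.mpr ?_).symm
  rw [show (x + y) ^ n - (x ^ n + n * x ^ (n - 1) * y) = (x + y) ^ n - x ^ (n - 1) * y * n - x ^ n
    by ring]
  exact sq_dvd_add_pow_sub_sub y x n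

theorem Nat.Coprime.add_mul_pow {u p : ℕ} (hu : u.Coprime p) (t : ℕ) {r : ℕ} (hr : r ≠ 0) :
    (u + t * p ^ r).Coprime p := by
  obtain ⟨s, rfl⟩ := Nat.exists_eq_succ_of_ne_zero hr
  rw [pow_succ, ← mul_assoc]
  exact (Nat.coprime_add_mul_right_left _ _ _).mpr hu

theorem Nat.pow_dvd_totient_prime_pow_mul {p : ℕ} (hp : p.Prime) (s : ℕ) :
    p ^ s ∣ φ (p ^ s) * p := by
  cases s with
  | zero => simp
  | succ s => exact ⟨p - 1, by rw [Nat.totient_prime_pow_succ hp]; ring⟩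

variable {p : ℕ}

theorem eulerQuotient_lt (hp : p.Prime) (t u : ℕ) : eulerQuotient p t u < p ^ t := by
  unfold eulerQuotient
  split_ifs
  · exact Nat.mod_lt _ (pow_pos hp.pos t)
  · exact pow_pos hp.pos t

theorem eulerQuotient_of_coprime (hp : p.Prime) {u : ℕ} (hu : u.Coprime p) (t : ℕ) :
    (eulerQuotient p t u : ℤ) = ((u : ℤ) ^ φ (p ^ t) - 1) / (p : ℤ) ^ t % (p : ℤ) ^ t := by
  have hu0 : 0 < u := Nat.pos_of_ne_zero <| by
    rintro rfl
    exact hp.one_lt.ne' (Nat.coprime_zero_left _ |>.mp hu)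
  rw [eulerQuotient, if_pos hu, Int.natCast_mod, Int.natCast_div,
    Nat.cast_sub (Nat.one_le_pow _ _ hu0)]
  push_cast
  rfl

theorem eulerQuotient_modEq_add_of_pow_modEq (hp : p.Prime) {t u v : ℕ} (hu : u.Coprime p)
    (hv : v.Coprime p) {c : ℤ}
    (h : (v : ℤ) ^ φ (p ^ t) ≡ u ^ φ (p ^ t) + c * p ^ t [ZMOD p ^ t * p ^ t]) :
    (eulerQuotient p t v : ℤ) ≡ eulerQuotient p t u + c [ZMOD p ^ t] := by
  have hpt : (p : ℤ) ^ t ≠ 0 := pow_ne_zero _ (by exact_mod_cast hp.ne_zero)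
  rw [eulerQuotient_of_coprime hp hu, eulerQuotient_of_coprime hp hv]
  calc _ ≡ ((v : ℤ) ^ φ (p ^ t) - 1) / p ^ t [ZMOD p ^ t] := Int.mod_modEq _ _
    _ ≡ ((u : ℤ) ^ φ (p ^ t) - 1) / p ^ t + c [ZMOD p ^ t] :=
        Int.ediv_modEq_add_of_modEq hpt (by convert h.sub_right 1 using 1; ring)
    _ ≡ _ [ZMOD p ^ t] := (Int.mod_modEq _ _).symm.add_right c

theorem eulerQuotient_add_mul_pow_self_modEq (hp : p.Prime) {r u : ℕ} (hr : r ≠ 0)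
    (hu : u.Coprime p) (t : ℕ) :
    (eulerQuotient p r (u + t * p ^ r) : ℤ) ≡
      eulerQuotient p r u + φ (p ^ r) * u ^ (φ (p ^ r) - 1) * t [ZMOD p ^ r] := by
  refine eulerQuotient_modEq_add_of_pow_modEq hp hu (hu.add_mul_pow t hr) ?_
  have hdvd : (p : ℤ) ^ r * p ^ r ∣ (t * p ^ r) ^ 2 := ⟨t ^ 2, by ring⟩
  have h := (Int.add_pow_modEq u (t * p ^ r) (φ (p ^ r))).of_dvd hdvd
  push_cast
  convert h using 2
  ring

theorem eulerQuotient_add_mul_pow_succ (hp : p.Prime) {u : ℕ} (hu : u.Coprime p) (t s : ℕ) :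
    eulerQuotient p s (u + t * p ^ (s + 1)) = eulerQuotient p s u := by
  set n := φ (p ^ s)
  have hlin : (p : ℤ) ^ s * p ^ s ∣ n * u ^ (n - 1) * (t * p ^ (s + 1)) := by
    obtain ⟨k, hk⟩ := Nat.pow_dvd_totient_prime_pow_mul hp s
    have hk' : (n : ℤ) * p = p ^ s * k := by exact_mod_cast hk
    exact ⟨k * u ^ (n - 1) * t, by linear_combination ((u : ℤ) ^ (n - 1) * t * p ^ s) * hk'⟩
  have hdvd : (p : ℤ) ^ s * p ^ s ∣ (t * p ^ (s + 1)) ^ 2 := ⟨t ^ 2 * p ^ 2, by ring⟩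
  have h := (Int.add_pow_modEq u (t * p ^ (s + 1)) n).of_dvd hdvd
  have hQ := eulerQuotient_modEq_add_of_pow_modEq hp hu (hu.add_mul_pow t s.succ_ne_zero)
    (c := 0) (by
      push_cast
      simpa using h.trans ((Int.modEq_zero_iff_dvd.mpr hlin).add_left _))
  rw [add_zero] at hQ
  exact (Int.natCast_modEq_iff.mp hQ).eq_of_lt_of_lt
    (eulerQuotient_lt hp _ _) (eulerQuotient_lt hp _ _)

theorem levelQuotient_lt (hp : p.Prime) (r u : ℕ) : levelQuotient p r u < p := by
  have hp0 : (0 : ℤ) < p := by exact_mod_cast hp.pos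
  have := Int.emod_lt_of_pos
    (((eulerQuotient p r u : ℤ) - eulerQuotient p (r - 1) u) / (p : ℤ) ^ (r - 1)) hp0
  unfold levelQuotient
  omega

theorem levelQuotient_modEq (hp : p.Prime) (r u : ℕ) :
    (levelQuotient p r u : ℤ) ≡
      ((eulerQuotient p r u : ℤ) - eulerQuotient p (r - 1) u) / (p : ℤ) ^ (r - 1) [ZMOD p] := by
  rw [levelQuotient, Int.toNat_of_nonneg (Int.emod_nonneg _ (by exact_mod_cast hp.ne_zero))]
  exact Int.mod_modEq _ _

theorem levelQuotient_add_mul_pow (hp : p.Prime) {r u : ℕ} (hr : r ≠ 0) (hu : u.Coprime p)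
    (t : ℕ) :
    (levelQuotient p r (u + t * p ^ r) : ZMod p) =
      levelQuotient p r u - u ^ (φ (p ^ r) - 1) * t := by
  have hr1 : r - 1 + 1 = r := Nat.succ_pred_eq_of_ne_zero hr
  have hlow : eulerQuotient p (r - 1) (u + t * p ^ r) = eulerQuotient p (r - 1) u := by
    simpa only [hr1] using eulerQuotient_add_mul_pow_succ hp hu t (r - 1)
  have hφ : (φ (p ^ r) : ℤ) = (p - 1) * p ^ (r - 1) := by
    rw [Nat.totient_prime_pow hp (Nat.pos_of_ne_zero hr), Nat.cast_mul, Nat.cast_sub hp.one_le]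
    push_cast
    ring
  have hdiff :
      (eulerQuotient p r (u + t * p ^ r) : ℤ) - eulerQuotient p (r - 1) (u + t * p ^ r) ≡
      (eulerQuotient p r u - eulerQuotient p (r - 1) u) +
        ((p - 1) * u ^ (φ (p ^ r) - 1) * t) * p ^ (r - 1) [ZMOD p ^ (r - 1) * p] := by
    rw [hlow, ← pow_succ, hr1]
    convert (eulerQuotient_add_mul_pow_self_modEq hp hr hu t).sub_right _ using 1
    rw [hφ]
    ring
  have hquot := Int.ediv_modEq_add_of_modEq (pow_ne_zero _ (by exact_mod_cast hp.ne_zero)) hdiff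
  have h := (levelQuotient_modEq hp r _).trans
    (hquot.trans ((levelQuotient_modEq hp r u).symm.add_right _))
  rw [← ZMod.intCast_eq_intCast_iff] at h
  push_cast [ZMod.natCast_self] at h
  linear_combination h

theorem existsUnique_levelQuotient_add_mul_pow_eq (hp : p.Prime) {r u l : ℕ} (hr : r ≠ 0)
    (hu : u.Coprime p) (hl : l < p) :
    ∃! t, t < p ∧ levelQuotient p r (u + t * p ^ r) = l := by
  have := Fact.mk hp
  have hc : (u : ZMod p) ^ (φ (p ^ r) - 1) ≠ 0 := pow_ne_zero _ fun h =>
    hp.coprime_iff_not_dvd.mp hu.symm ((ZMod.natCast_eq_zero_iff _ _).mp h)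
  have hiff : ∀ t, levelQuotient p r (u + t * p ^ r) = l ↔
      (t : ZMod p) = (levelQuotient p r u - l) / (u : ZMod p) ^ (φ (p ^ r) - 1) := by
    intro t
    have hcast : levelQuotient p r (u + t * p ^ r) = l ↔
        (levelQuotient p r (u + t * p ^ r) : ZMod p) = l :=
      ⟨congrArg _, fun h => ((ZMod.natCast_eq_natCast_iff _ _ _).mp h).eq_of_lt_of_lt
        (levelQuotient_lt hp r _) hl⟩
    rw [hcast, levelQuotient_add_mul_pow hp hr hu t, eq_div_iff hc]
    constructor <;> intro h <;> linear_combination -h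
  refine ⟨((levelQuotient p r u - l) / (u : ZMod p) ^ (φ (p ^ r) - 1) : ZMod p).val,
    ⟨ZMod.val_lt _, (hiff _).mpr (ZMod.natCast_zmod_val _)⟩, ?_⟩
  rintro t ⟨ht, htl⟩
  rw [← (hiff t).mp htl, ZMod.val_natCast_of_lt ht]

theorem card_filter_levelQuotient_eq (hp : p.Prime) {r l : ℕ} (hr : r ≠ 0) (hl : l < p)
    {S : Finset ℕ} (hS : ∀ a ∈ S, a < p ^ r ∧ a.Coprime p) :
    #{u ∈ range (p ^ (r + 1)) | u % p ^ r ∈ S ∧ levelQuotient p r u = l} = #S := by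
  have hdecomp : ∀ u, u % p ^ r + u / p ^ r * p ^ r = u := fun u => Nat.mod_add_div' u _
  refine card_bij (fun u _ => u % p ^ r) (fun u hu => (mem_filter.mp hu).2.1) ?_ ?_
  · intro u₁ hu₁ u₂ hu₂ hmod
    simp only [mem_filter, mem_range] at hu₁ hu₂
    have hquot : ∀ u, u < p ^ (r + 1) → u / p ^ r < p := fun u hu =>
      Nat.div_lt_of_lt_mul (by rwa [← pow_succ])
    obtain ⟨t, -, huniq⟩ :=
      existsUnique_levelQuotient_add_mul_pow_eq hp hr (hS _ hu₁.2.1).2 hl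
    have h₁ := huniq _ ⟨hquot _ hu₁.1, by rw [hdecomp]; exact hu₁.2.2⟩
    have h₂ := huniq _ ⟨hquot _ hu₂.1, by rw [hmod, hdecomp]; exact hu₂.2.2⟩
    rw [← hdecomp u₁, ← hdecomp u₂, hmod, h₁, h₂]
  · intro a ha
    obtain ⟨ha_lt, ha_cop⟩ := hS a ha
    obtain ⟨t, ⟨ht, htl⟩, -⟩ := existsUnique_levelQuotient_add_mul_pow_eq hp hr ha_cop hl
    have hmod : (a + t * p ^ r) % p ^ r = a := by
      rw [Nat.add_mul_mod_self_right, Nat.mod_eq_of_lt ha_lt]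
    refine ⟨a + t * p ^ r,
      mem_filter.mpr ⟨mem_range.mpr ?_, by rw [hmod]; exact ⟨ha, htl⟩⟩, hmod⟩
    calc a + t * p ^ r < (t + 1) * p ^ r := by linarith
      _ ≤ p * p ^ r := Nat.mul_le_mul_right _ ht
      _ = p ^ (r + 1) := (pow_succ' p r).symm

theorem card_filter_range_mul_natCast_eq {N : ℕ} [NeZero N] (d : ℕ) (x : ZMod N) :
    #{a ∈ range (N * d) | ((a : ℕ) : ZMod N) = x} = d := by
  have hiff : ∀ a : ℕ, (a : ZMod N) = x ↔ a ≡ x.val [MOD N] := fun a => by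
    rw [← ZMod.natCast_eq_natCast_iff, ZMod.natCast_zmod_val]
  simp_rw [hiff, ← Nat.count_eq_card_filter_range, Nat.count_modEq_card _ (NeZero.pos N)]
  simp [Nat.mul_div_cancel_left _ (NeZero.pos N)]

theorem card_filter_levelQuotient_natCast_eq (hp : p.Prime) {r j l : ℕ} (hj : 0 < j)
    (hjr : j ≤ r) (hl : l < p) {x : ZMod (p ^ j)} (hx : IsUnit x) :
    #{u ∈ range (p ^ (r + 1)) |
      (u.Coprime p ∧ levelQuotient p r u = l) ∧ ((u : ℕ) : ZMod (p ^ j)) = x} =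
      p ^ (r - j) := by
  have : NeZero (p ^ j) := ⟨pow_ne_zero _ hp.ne_zero⟩
  have hcop : ∀ u : ℕ, (u : ZMod (p ^ j)) = x → u.Coprime p := fun u hu =>
    (Nat.coprime_pow_right_iff hj _ _).mp ((ZMod.isUnit_iff_coprime _ _).mp (hu ▸ hx))
  have hmod : ∀ u : ℕ, ((u % p ^ r : ℕ) : ZMod (p ^ j)) = u := fun u =>
    (ZMod.natCast_eq_natCast_iff _ _ _).mpr ((Nat.mod_modEq u _).of_dvd (pow_dvd_pow p hjr))
  calc _ = #{u ∈ range (p ^ (r + 1)) |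
          u % p ^ r ∈ {a ∈ range (p ^ r) | ((a : ℕ) : ZMod (p ^ j)) = x} ∧
            levelQuotient p r u = l} := by
        congr 1
        ext u
        simp only [mem_filter, mem_range, hmod, Nat.mod_lt _ (pow_pos hp.pos r), true_and]
        exact and_congr_right fun _ =>
          ⟨fun h => ⟨h.2, h.1.2⟩, fun h => ⟨⟨hcop u h.1, h.2⟩, h.1⟩⟩
    _ = #{a ∈ range (p ^ r) | ((a : ℕ) : ZMod (p ^ j)) = x} :=
        card_filter_levelQuotient_eq hp (by omega) hl fun a ha =>
          ⟨mem_range.mp (mem_filter.mp ha).1, hcop a (mem_filter.mp ha).2⟩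
    _ = p ^ (r - j) := by
        rw [← pow_mul_pow_sub p hjr]
        exact card_filter_range_mul_natCast_eq _ x

theorem levelQuotient_fiber_card_general (p r j l : ℕ) (hp : p.Prime)
    (hj1 : 1 ≤ j) (hjr : j ≤ r) (hl : l < p) :
    let D : Finset ℕ := (Finset.range (p ^ (r + 1))).filter
      (fun u => Nat.Coprime u p ∧ levelQuotient p r u = l)
    (∀ x : ZMod (p ^ j), IsUnit x → ∃ u ∈ D, (u : ZMod (p ^ j)) = x) ∧
    (∀ x : ZMod (p ^ j), IsUnit x →
      (D.filter (fun u : ℕ => (u : ZMod (p ^ j)) = x)).card = p ^ (r - j)) := by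
  intro D
  have hcard : ∀ x : ZMod (p ^ j), IsUnit x →
      #{u ∈ D | ((u : ℕ) : ZMod (p ^ j)) = x} = p ^ (r - j) := fun x hx =>
    (congrArg card (filter_filter _ _ _)).trans
      (card_filter_levelQuotient_natCast_eq hp hj1 hjr hl hx)
  refine ⟨fun x hx => ?_, hcard⟩
  obtain ⟨u, hu⟩ := card_pos.mp (hcard x hx ▸ pow_pos hp.pos _)
  exact ⟨u, (mem_filter.mp hu).1, (mem_filter.mp hu).2⟩

/-- Reduction mod `p^j` maps `D_l` onto `(ℤ/p^j)^*`, each element having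
exactly `p^{r-j}` preimages in `D_l`. -/
theorem levelQuotient_fiber_card (p r j l : ℕ) (hp : p.Prime) (hodd : Odd p)
    (hr : 1 ≤ r) (hj1 : 1 ≤ j) (hjr : j ≤ r) (hl : l < p) :
    let D : Finset ℕ := (Finset.range (p ^ (r + 1))).filter
      (fun u => Nat.Coprime u p ∧ levelQuotient p r u = l)
    (∀ x : ZMod (p ^ j), IsUnit x → ∃ u ∈ D, (u : ZMod (p ^ j)) = x) ∧
    (∀ x : ZMod (p ^ j), IsUnit x →
      (D.filter (fun u : ℕ => (u : ZMod (p ^ j)) = x)).card = p ^ (r - j)) :=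
  levelQuotient_fiber_card_general p r j l hp hj1 hjr hl
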